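/- arXiv:2604.25268 — 4 statements merged into one kernel-verified Lean document; each statement's English description precedes it below -/
import Mathlib

section
/- For p ≥ 2, more generally: if δ₁,...,δ_p are mutually independent random variables with δ_j ∈ {-1,0,1} (and δ₁ ∈ {-1,0}), then the induced distribution on the model space (where vectors with (δ_{j-1},δ_j) patterns (0,0) and (0,1) inducing the same model are identified) cannot be uniform. Specifically, in the two-dimensional case with models m₀₀ (preimage {(0,0),(0,1)}), m₁₀ = {(-1,0)}, m₀₁ = {(0,-1)}, m_F = {(-1,1)}, m_S = {(-1,-1)}: the equalities π(m₁₀) = π(m₀₁) = π(m_F) = π(m_S) force q⁽²⁾₋₁ = q⁽²⁾₀ = q⁽²⁾₁ and q⁽¹⁾₀ = q⁽¹⁾₋₁, which makes π(m₀₀) = 2π(m₁₀), contradicting uniformity. -/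
/-- In the two-dimensional case with independent δ₁, δ₂, the equalities
π(m₁₀) = π(m₀₁) = π(m_F) = π(m_S) = c > 0 force q⁽²⁾₋₁ = q⁽²⁾₀ = q⁽²⁾₁ and
q⁽¹⁾₀ = q⁽¹⁾₋₁, which makes π(m₀₀) = 2·π(m₁₀) = 2c, contradicting uniformity. -/
theorem product_prior_forces_nonuniform
    (q1 q2 : ℤ → ℝ)
    (hq1 : ∀ s, 0 ≤ q1 s) (hq2 : ∀ s, 0 ≤ q2 s)
    (hsum1 : q1 (-1) + q1 0 + q1 1 = 1) (hq11 : q1 1 = 0)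
    (hsum2 : q2 (-1) + q2 0 + q2 1 = 1)
    (c : ℝ) (hc : 0 < c)
    (h10 : q1 (-1) * q2 0 = c)
    (h01 : q1 0 * q2 (-1) = c)
    (hF : q1 (-1) * q2 1 = c)
    (hS : q1 (-1) * q2 (-1) = c) :
    q2 (-1) = q2 0 ∧ q2 0 = q2 1 ∧ q1 0 = q1 (-1) ∧
    q1 0 * (q2 0 + q2 1) = 2 * c ∧
    q1 0 * (q2 0 + q2 1) ≠ c := by
  have hq1ne : q1 (-1) ≠ 0 := by
    intro h; rw [h, zero_mul] at h10; exact hc.ne h10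
  have e1 : q2 (-1) = q2 0 := mul_left_cancel₀ hq1ne (hS.trans h10.symm)
  have e2 : q2 0 = q2 1 := mul_left_cancel₀ hq1ne (h10.trans hF.symm)
  have hq2ne : q2 (-1) ≠ 0 := by
    intro h; rw [h, mul_zero] at hS; exact hc.ne hS
  have e3 : q1 0 = q1 (-1) := mul_right_cancel₀ hq2ne (h01.trans hS.symm)
  refine ⟨e1, e2, e3, ?_, ?_⟩
  · rw [e3, mul_add, h10, hF]; ring
  · rw [e3, mul_add, h10, hF]; intro h; nlinarith
end

section
/- Consider the Markov chain prior on δ = (δ₁,...,δ_p) ∈ {-1,0,1}^p defined by initial probabilities P(δ₁ = -1) = F_{2p}/F_{2p+2}, P(δ₁ = 0) = F_{2p-1}/F_{2p+2}, P(δ₁ = 1) = F_{2p}/F_{2p+2}, and transition probabilities, with r_j = p - j + 1: from states -1 and 1, transition to -1, 0, 1 with probabilities F_{2r_j}/F_{2r_j+2}, F_{2r_j-1}/F_{2r_j+2}, F_{2r_j}/F_{2r_j+2} respectively; from state 0, transition to -1, 0 with probabilities F_{2r_j}/F_{2r_j+1}, F_{2r_j-1}/F_{2r_j+1} and to 1 with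 probability 0. Then every admissible sequence δ (i.e., every δ with no consecutive pair (0,1)) has probability exactly 1/F_{2p+2}. -/
open Finset

/-- Initial probabilities of the Markov chain prior:
P(δ₁ = 0) = F_{2p-1}/F_{2p+2}, P(δ₁ = -1) = P(δ₁ = 1) = F_{2p}/F_{2p+2}. -/
noncomputable def mcInit (p : ℕ) (a : ℤ) : ℝ :=
  if a = 0 then (Nat.fib (2 * p - 1) : ℝ) / (Nat.fib (2 * p + 2))
  else (Nat.fib (2 * p) : ℝ) / (Nat.fib (2 * p + 2))

/-- Transition probabilities at (0-indexed) step j, with r = p - j (so that for the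
1-indexed position j+1 one has r = p - (j+1) + 1): from states -1 and 1 one moves to
-1, 0, 1 with probabilities F_{2r}/F_{2r+2}, F_{2r-1}/F_{2r+2}, F_{2r}/F_{2r+2};
from state 0 one moves to -1, 0 with probabilities F_{2r}/F_{2r+1}, F_{2r-1}/F_{2r+1},
and to 1 with probability 0. -/
noncomputable def mcTrans (p j : ℕ) (a b : ℤ) : ℝ :=
  let r := p - j
  if a = 0 then
    (if b = 1 then 0
     else if b = 0 then (Nat.fib (2 * r - 1) : ℝ) / (Nat.fib (2 * r + 1))
     else (Nat.fib (2 * r) : ℝ) / (Nat.fib (2 * r + 1)))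
  else
    (if b = 0 then (Nat.fib (2 * r - 1) : ℝ) / (Nat.fib (2 * r + 2))
     else (Nat.fib (2 * r) : ℝ) / (Nat.fib (2 * r + 2)))

/-- Normalizer: N r a = F_{2r+1} if a = 0, F_{2r+2} otherwise. -/
noncomputable def mcN (r : ℕ) (a : ℤ) : ℝ :=
  if a = 0 then (Nat.fib (2 * r + 1) : ℝ) else (Nat.fib (2 * r + 2) : ℝ)

lemma mcN_pos (r : ℕ) (a : ℤ) : 0 < mcN r a := by
  unfold mcN
  split <;> exact_mod_cast Nat.fib_pos.2 (by omega)

lemma mcN_ne_zero (r : ℕ) (a : ℤ) : mcN r a ≠ 0 := (mcN_pos r a).ne'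

lemma mcInit_eq (p : ℕ) (hp : 1 ≤ p) (a : ℤ) :
    mcInit p a = mcN (p - 1) a / (Nat.fib (2 * p + 2) : ℝ) := by
  unfold mcInit mcN
  have h1 : 2 * (p - 1) + 1 = 2 * p - 1 := by omega
  have h2 : 2 * (p - 1) + 2 = 2 * p := by omega
  rw [h1, h2]
  split <;> rfl

lemma mcTrans_eq (p j : ℕ) (hj : 1 ≤ j) (hjp : j < p) (a b : ℤ)
    (hadm : ¬(a = 0 ∧ b = 1)) :
    mcTrans p j a b = mcN (p - j - 1) b / mcN (p - j) a := by
  unfold mcTrans mcN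
  have hr : 1 ≤ p - j := by omega
  have h1 : 2 * (p - j - 1) + 1 = 2 * (p - j) - 1 := by omega
  have h2 : 2 * (p - j - 1) + 2 = 2 * (p - j) := by omega
  simp only [h1, h2]
  by_cases ha : a = 0
  · simp only [ha, if_true]
    by_cases hb1 : b = 1
    · exact absurd ⟨ha, hb1⟩ hadm
    · by_cases hb0 : b = 0 <;> simp [hb1, hb0]
  · simp only [ha, if_false]
    by_cases hb0 : b = 0 <;> simp [hb0]

/-- Under the Markov chain prior, every admissible indicator sequence
(no consecutive pair (0,1)) has probability exactly 1/F_{2p+2}. -/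
theorem markov_prior_uniform (p : ℕ) (hp : 1 ≤ p) (δ : ℕ → ℤ)
    (hval : ∀ j < p, δ j ∈ ({-1, 0, 1} : Set ℤ))
    (hadm : ∀ j, 1 ≤ j → j < p → ¬(δ (j - 1) = 0 ∧ δ j = 1)) :
    mcInit p (δ 0) * ∏ j ∈ Finset.Ico 1 p, mcTrans p j (δ (j - 1)) (δ j) =
      1 / (Nat.fib (2 * p + 2) : ℝ) := by
  have key : ∀ m, 1 ≤ m → m ≤ p →
      ∏ j ∈ Finset.Ico 1 m, mcTrans p j (δ (j - 1)) (δ j) =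
        mcN (p - m) (δ (m - 1)) / mcN (p - 1) (δ 0) := by
    intro m hm hmp
    induction m with
    | zero => omega
    | succ n ih =>
      by_cases hn : 1 ≤ n
      · rw [Finset.prod_Ico_succ_top hn, ih hn (by omega),
          mcTrans_eq p n hn (by omega) _ _ (hadm n hn (by omega))]
        have h1 : p - n - 1 = p - (n + 1) := by omega
        have h2 : n + 1 - 1 = n := by omega
        rw [h1, h2]
        field_simp [mcN_ne_zero]
      · have hn0 : n = 0 := by omega
        subst hn0
        simp [mcN_ne_zero]
  rw [mcInit_eq p hp, key p hp le_rfl]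
  have h0 : p - p = 0 := by omega
  rw [h0]
  have hN0 : mcN 0 (δ (p - 1)) = 1 := by
    unfold mcN; split <;> norm_num
  rw [hN0]
  have := mcN_ne_zero (p - 1) (δ 0)
  have hf : (Nat.fib (2 * p + 2) : ℝ) ≠ 0 := by
    exact_mod_cast (Nat.fib_pos.2 (by omega)).ne'
  field_simp
end

section
/- Let Z₁,...,Z_k be i.i.d. standard normal. Define Φ_k = E[(∏_{j=1}^k Z_j²)(∏_{j=2}^k (Z_j - Z_{j-1})²)] and Ψ_k = E[(∏_{j=1}^{k-1} Z_j²) Z_k⁴ (∏_{j=2}^k (Z_j - Z_{j-1})²)]. Then the recursions Φ_k = 3Φ_{k-1} + Ψ_{k-1} and Ψ_k = 15Φ_{k-1} + 3Ψ_{k-1} hold for k ≥ 2, with Φ₁ = 1, Ψ₁ = 3. -/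
/-!
Write the integrand as `∏ⱼ zⱼ² φ(zⱼ) · ∏ⱼ (zⱼ₊₁ - zⱼ)²` with `φ` the standard normal density,
and let `F k m` (`fusionMoment`) be its integral against `z_last ^ m`, so that `Φ = F k 0` and
`Ψ = F k 2`. Integrating out the last coordinate `x` produces the factor `x ^ (m+2) (x - y)² φ(x)`,
`y` being the previous coordinate; expanding the square gives
`F (k+1) m = M (m+4) F k 0 - 2 M (m+3) F k 1 + M (m+2) F k 2` with `M n = ∫ xⁿ φ(x)`.
Integration by parts gives `M (n+2) = (n+1) M n`, so the odd moments vanish and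
`M 2, M 4, M 6 = 1, 3, 15`.
-/

open MeasureTheory Real

/-- Φ_{k+1} = E[(∏_{j=1}^{k+1} Z_j²)(∏_{j=2}^{k+1} (Z_j - Z_{j-1})²)] for i.i.d.
standard normals, written as a Gaussian integral over ℝ^{k+1}. -/
noncomputable def fusionPhi (k : ℕ) : ℝ :=
  ∫ z : Fin (k + 1) → ℝ,
    ((∏ j, (z j) ^ 2) * ∏ j : Fin k, (z j.succ - z j.castSucc) ^ 2) *
      ((2 * π) ^ (-((k : ℝ) + 1) / 2) * Real.exp (-(∑ j, (z j) ^ 2) / 2))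

/-- Ψ_{k+1} = E[(∏_{j=1}^{k} Z_j²) Z_{k+1}⁴ (∏_{j=2}^{k+1} (Z_j - Z_{j-1})²)]:
the same expectation with an extra factor Z_{k+1}² on the last coordinate. -/
noncomputable def fusionPsi (k : ℕ) : ℝ :=
  ∫ z : Fin (k + 1) → ℝ,
    ((∏ j, (z j) ^ 2) * (z (Fin.last k)) ^ 2 *
        ∏ j : Fin k, (z j.succ - z j.castSucc) ^ 2) *
      ((2 * π) ^ (-((k : ℝ) + 1) / 2) * Real.exp (-(∑ j, (z j) ^ 2) / 2))

open Finset ProbabilityTheory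

lemma gaussianPDFReal_zero_one (x : ℝ) :
    gaussianPDFReal 0 1 x = (2 * π) ^ (-(1 : ℝ) / 2) * exp (-x ^ 2 / 2) := by
  rw [gaussianPDFReal, sqrt_eq_rpow, ← rpow_neg (by positivity)]
  norm_num

lemma hasDerivAt_gaussianPDFReal_zero_one (x : ℝ) :
    HasDerivAt (gaussianPDFReal 0 1) (-x * gaussianPDFReal 0 1 x) x := by
  have h : HasDerivAt (fun x : ℝ => -x ^ 2 / 2) (-x) x := by
    simpa using ((hasDerivAt_pow 2 x).neg.div_const 2).congr_deriv (by ring)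
  simp_rw [funext gaussianPDFReal_zero_one]
  exact (h.exp.const_mul _).congr_deriv (by ring)

lemma integrable_pow_mul_gaussianPDFReal (n : ℕ) :
    Integrable fun x : ℝ => x ^ n * gaussianPDFReal 0 1 x := by
  have h := integrable_rpow_mul_exp_neg_mul_sq (b := 2⁻¹) (by norm_num)
    (s := n) (by linarith [(n.cast_nonneg : (0 : ℝ) ≤ n)])
  refine (h.const_mul ((2 * π) ^ (-(1 : ℝ) / 2))).congr (.of_forall fun x => ?_)
  simp only [rpow_natCast, gaussianPDFReal_zero_one]
  ring_nf

noncomputable def gaussianMoment (n : ℕ) : ℝ := ∫ x, x ^ n * gaussianPDFReal 0 1 x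

lemma gaussianMoment_zero : gaussianMoment 0 = 1 := by
  simpa [gaussianMoment] using integral_gaussianPDFReal_eq_one 0 one_ne_zero

lemma gaussianMoment_one : gaussianMoment 1 = 0 := by
  have h := integral_neg_eq_self (fun x : ℝ => x * gaussianPDFReal 0 1 x) volume
  simp only [gaussianPDFReal_zero_one, neg_sq, neg_mul, integral_neg] at h
  simp only [gaussianMoment, pow_one, gaussianPDFReal_zero_one]
  linarith

lemma gaussianMoment_add_two (n : ℕ) : gaussianMoment (n + 2) = (n + 1) * gaussianMoment n := by
  have hu (x : ℝ) : HasDerivAt (fun x : ℝ => x ^ (n + 1)) ((n + 1) * x ^ n) x := by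
    simpa using hasDerivAt_pow (n + 1) x
  have hv (x : ℝ) : HasDerivAt (fun x => -gaussianPDFReal 0 1 x) (x * gaussianPDFReal 0 1 x) x :=
    (hasDerivAt_gaussianPDFReal_zero_one x).neg.congr_deriv (by ring)
  have h := integral_mul_deriv_eq_deriv_mul_of_integrable (fun x _ => hu x) (fun x _ => hv x)
    ((integrable_pow_mul_gaussianPDFReal (n + 2)).congr (.of_forall fun x => by simp; ring))
    (((integrable_pow_mul_gaussianPDFReal n).const_mul (-(n + 1))).congr
      (.of_forall fun x => by simp; ring))
    ((integrable_pow_mul_gaussianPDFReal (n + 1)).neg.congr (.of_forall fun x => by simp))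
  simp only [mul_neg, integral_neg, neg_neg] at h
  simp only [gaussianMoment, ← integral_const_mul, ← mul_assoc, ← h, pow_succ]

lemma piFinSuccAbove_last_symm_apply {α : Type*} [MeasurableSpace α] {n : ℕ}
    (p : α × (Fin n → α)) :
    (MeasurableEquiv.piFinSuccAbove (fun _ => α) (Fin.last n)).symm p = Fin.snoc p.2 p.1 := by
  simp [MeasurableEquiv.piFinSuccAbove_symm_apply, Fin.snocEquiv]

section Snoc

variable {α E : Type*} [MeasureSpace α] [NormedAddCommGroup E] {n : ℕ}

lemma integrable_comp_snoc_iff [SigmaFinite (volume : Measure α)] {f : (Fin (n + 1) → α) → E} :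
    Integrable (fun p : α × (Fin n → α) => f (Fin.snoc p.2 p.1)) ↔ Integrable f := by
  simp_rw [← piFinSuccAbove_last_symm_apply]
  exact (volume_preserving_piFinSuccAbove (fun _ : Fin (n + 1) => α) _).symm.integrable_comp_emb
    (MeasurableEquiv.measurableEmbedding _)

lemma integral_comp_snoc [SigmaFinite (volume : Measure α)] [NormedSpace ℝ E]
    (f : (Fin (n + 1) → α) → E) :
    ∫ p : α × (Fin n → α), f (Fin.snoc p.2 p.1) = ∫ z, f z := by
  simp_rw [← piFinSuccAbove_last_symm_apply]
  exact (volume_preserving_piFinSuccAbove (fun _ : Fin (n + 1) => α) _).symm.integral_comp' f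

lemma integrable_comp_eval_zero_iff {f : α → E} :
    Integrable (fun z : Fin 1 → α => f (z 0)) ↔ Integrable f :=
  (volume_preserving_funUnique (Fin 1) α).integrable_comp_emb
    (MeasurableEquiv.measurableEmbedding _)

lemma integral_comp_eval_zero [NormedSpace ℝ E] (f : α → E) :
    ∫ z : Fin 1 → α, f (z 0) = ∫ x, f x :=
  (volume_preserving_funUnique (Fin 1) α).integral_comp' f

end Snoc

noncomputable def fusionIntegrand (k : ℕ) (z : Fin (k + 1) → ℝ) : ℝ :=
  (∏ j, z j ^ 2 * gaussianPDFReal 0 1 (z j)) * ∏ j : Fin k, (z j.succ - z j.castSucc) ^ 2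

noncomputable def fusionMoment (k m : ℕ) : ℝ :=
  ∫ z, fusionIntegrand k z * z (Fin.last k) ^ m

lemma prod_gaussianPDFReal {ι : Type*} [Fintype ι] (z : ι → ℝ) :
    ∏ j, gaussianPDFReal 0 1 (z j) =
      (2 * π) ^ (-(Fintype.card ι : ℝ) / 2) * exp (-(∑ j, z j ^ 2) / 2) := by
  simp only [gaussianPDFReal_zero_one, prod_mul_distrib, prod_const, card_univ,
    ← exp_sum, ← rpow_mul_natCast (by positivity : (0 : ℝ) ≤ 2 * π), sum_div, neg_div,
    sum_neg_distrib]
  ring_nf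

lemma fusionIntegrand_eq (k : ℕ) (z : Fin (k + 1) → ℝ) :
    fusionIntegrand k z = ((∏ j, (z j) ^ 2) * ∏ j : Fin k, (z j.succ - z j.castSucc) ^ 2) *
      ((2 * π) ^ (-((k : ℝ) + 1) / 2) * Real.exp (-(∑ j, (z j) ^ 2) / 2)) := by
  rw [fusionIntegrand, prod_mul_distrib, prod_gaussianPDFReal, Fintype.card_fin]
  push_cast
  ring

lemma fusionPhi_eq_fusionMoment (k : ℕ) : fusionPhi k = fusionMoment k 0 := by
  simp only [fusionPhi, fusionMoment, fusionIntegrand_eq, pow_zero, mul_one]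

lemma fusionPsi_eq_fusionMoment (k : ℕ) : fusionPsi k = fusionMoment k 2 := by
  simp only [fusionPsi, fusionMoment, fusionIntegrand_eq]
  congr 1 with z
  ring

lemma fusionIntegrand_zero (z : Fin 1 → ℝ) :
    fusionIntegrand 0 z = z 0 ^ 2 * gaussianPDFReal 0 1 (z 0) := by
  simp [fusionIntegrand]

lemma fusionIntegrand_snoc (k : ℕ) (y : Fin (k + 1) → ℝ) (x : ℝ) :
    fusionIntegrand (k + 1) (Fin.snoc y x) =
      fusionIntegrand k y * ((x - y (Fin.last k)) ^ 2 * (x ^ 2 * gaussianPDFReal 0 1 x)) := by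
  simp only [fusionIntegrand, Fin.prod_univ_castSucc, Fin.snoc_castSucc, Fin.snoc_last,
    Fin.succ_castSucc, Fin.succ_last]
  ring

-- The powers `^ 0` and `^ 1` are kept so that each term is a product matching `fusionMoment k i`.
lemma fusionIntegrand_snoc_mul_pow (k m : ℕ) (y : Fin (k + 1) → ℝ) (x : ℝ) :
    fusionIntegrand (k + 1) (Fin.snoc y x) * x ^ m =
      x ^ (m + 4) * gaussianPDFReal 0 1 x * (fusionIntegrand k y * y (Fin.last k) ^ 0) +
      -2 * (x ^ (m + 3) * gaussianPDFReal 0 1 x * (fusionIntegrand k y * y (Fin.last k) ^ 1)) +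
      x ^ (m + 2) * gaussianPDFReal 0 1 x * (fusionIntegrand k y * y (Fin.last k) ^ 2) := by
  rw [fusionIntegrand_snoc]
  ring

lemma integrable_fusionIntegrand_mul_pow_last (k m : ℕ) :
    Integrable fun z => fusionIntegrand k z * z (Fin.last k) ^ m := by
  induction k generalizing m with
  | zero =>
    simp only [fusionIntegrand_zero, Fin.last_zero]
    refine integrable_comp_eval_zero_iff
      (f := fun x => x ^ 2 * gaussianPDFReal 0 1 x * x ^ m) |>.mpr ?_
    exact (integrable_pow_mul_gaussianPDFReal (m + 2)).congr (.of_forall fun x => by ring)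
  | succ k ih =>
    rw [← integrable_comp_snoc_iff]
    simp only [Fin.snoc_last, fusionIntegrand_snoc_mul_pow]
    exact (((integrable_pow_mul_gaussianPDFReal _).mul_prod (ih 0)).add
      (((integrable_pow_mul_gaussianPDFReal _).mul_prod (ih 1)).const_mul _)).add
      ((integrable_pow_mul_gaussianPDFReal _).mul_prod (ih 2))

lemma fusionMoment_zero (m : ℕ) : fusionMoment 0 m = gaussianMoment (m + 2) := by
  rw [gaussianMoment, ← integral_comp_eval_zero]
  simp only [fusionMoment, fusionIntegrand_zero, Fin.last_zero]
  congr 1 with z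
  ring

lemma fusionMoment_succ (k m : ℕ) :
    fusionMoment (k + 1) m =
      gaussianMoment (m + 4) * fusionMoment k 0 - 2 * gaussianMoment (m + 3) * fusionMoment k 1 +
        gaussianMoment (m + 2) * fusionMoment k 2 := by
  have hintegrable (n i : ℕ) : Integrable fun p : ℝ × (Fin (k + 1) → ℝ) =>
      p.1 ^ n * gaussianPDFReal 0 1 p.1 * (fusionIntegrand k p.2 * p.2 (Fin.last k) ^ i) :=
    (integrable_pow_mul_gaussianPDFReal n).mul_prod (integrable_fusionIntegrand_mul_pow_last k i)
  have hprod (n i : ℕ) : ∫ p : ℝ × (Fin (k + 1) → ℝ),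
      p.1 ^ n * gaussianPDFReal 0 1 p.1 * (fusionIntegrand k p.2 * p.2 (Fin.last k) ^ i) =
        gaussianMoment n * fusionMoment k i :=
    integral_prod_mul (fun x => x ^ n * gaussianPDFReal 0 1 x)
      (fun z => fusionIntegrand k z * z (Fin.last k) ^ i)
  rw [fusionMoment, ← integral_comp_snoc]
  simp only [Fin.snoc_last, fusionIntegrand_snoc_mul_pow]
  rw [integral_add, integral_add, integral_const_mul, hprod, hprod, hprod]
  · ring
  exacts [hintegrable _ 0, (hintegrable _ 1).const_mul _,
    (hintegrable _ 0).add ((hintegrable _ 1).const_mul _), hintegrable _ 2]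

/-- The coupled recursions Φ_k = 3Φ_{k-1} + Ψ_{k-1}, Ψ_k = 15Φ_{k-1} + 3Ψ_{k-1}
for k ≥ 2, with Φ₁ = 1 and Ψ₁ = 3 (indices shifted so that `fusionPhi k` = Φ_{k+1}). -/
theorem fusionPhi_fusionPsi_recursion :
    fusionPhi 0 = 1 ∧ fusionPsi 0 = 3 ∧
    ∀ k : ℕ,
      fusionPhi (k + 1) = 3 * fusionPhi k + fusionPsi k ∧
      fusionPsi (k + 1) = 15 * fusionPhi k + 3 * fusionPsi k := by
  have hM : gaussianMoment 2 = 1 ∧ gaussianMoment 3 = 0 ∧ gaussianMoment 4 = 3 ∧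
      gaussianMoment 5 = 0 ∧ gaussianMoment 6 = 15 := by
    norm_num [gaussianMoment_add_two, gaussianMoment_zero, gaussianMoment_one]
  obtain ⟨h2, h3, h4, h5, h6⟩ := hM
  simp only [fusionPhi_eq_fusionMoment, fusionPsi_eq_fusionMoment, fusionMoment_succ, h3, h5,
    fusionMoment_zero]
  exact ⟨h2, h4, fun k => ⟨by rw [h4, h2]; ring, by rw [h6, h4]; ring⟩⟩
end

section
/- Let K_p denote the number of models for p ordered covariates under simultaneous variable selection and variable fusion, i.e., the number of admissible indicator vectors δ ∈ {-1,0,1}^p with δ₁ ∈ {-1,0} and no consecutive pair (δ_{j-1},δ_j) = (0,1). Then K_p = F_{2p+1}, the (2p+1)-st Fibonacci number. -/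
private def S : Set ℤ := {-1, 0, 1}

private def Adm (n : ℕ) (δ : Fin (n + 1) → ℤ) : Prop :=
  (∀ j, δ j ∈ S) ∧
  δ ⟨0, n.succ_pos⟩ ≠ 1 ∧
  ∀ j (h : j + 1 < n + 1),
    ¬(δ ⟨j, Nat.lt_of_succ_lt h⟩ = 0 ∧ δ ⟨j + 1, h⟩ = 1)

private lemma snoc_mk {n : ℕ} (δ : Fin (n + 1) → ℤ) (x : ℤ) (j : ℕ) (h : j < n + 1)
    (h2 : j < n + 2) : (Fin.snoc δ x : Fin (n + 2) → ℤ) ⟨j, h2⟩ = δ ⟨j, h⟩ := by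
  have : (⟨j, h2⟩ : Fin (n + 2)) = Fin.castSucc ⟨j, h⟩ := rfl
  rw [this, Fin.snoc_castSucc]

private lemma snoc_top {n : ℕ} (δ : Fin (n + 1) → ℤ) (x : ℤ) (h2 : n + 1 < n + 2) :
    (Fin.snoc δ x : Fin (n + 2) → ℤ) ⟨n + 1, h2⟩ = x := by
  have : (⟨n + 1, h2⟩ : Fin (n + 2)) = Fin.last (n + 1) := rfl
  rw [this, Fin.snoc_last]

private lemma adm_snoc (n : ℕ) (δ : Fin (n + 1) → ℤ) (x : ℤ) :
    Adm (n + 1) (Fin.snoc δ x) ↔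
      Adm n δ ∧ x ∈ S ∧ ¬(δ (Fin.last n) = 0 ∧ x = 1) := by
  constructor
  · rintro ⟨h1, h2, h3⟩
    refine ⟨⟨?_, ?_, ?_⟩, ?_, ?_⟩
    · intro j
      have := h1 (Fin.castSucc j)
      rwa [Fin.snoc_castSucc] at this
    · rwa [snoc_mk δ x 0 n.succ_pos] at h2
    · intro j hj H
      refine h3 j (by omega) ?_
      rw [snoc_mk δ x j (by omega), snoc_mk δ x (j+1) hj]
      exact H
    · have := h1 (Fin.last (n + 1))
      rwa [Fin.snoc_last] at this
    · rintro ⟨H0, H1⟩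
      refine h3 n (by omega) ?_
      rw [snoc_mk δ x n (by omega), snoc_top δ x, H1]
      refine ⟨?_, rfl⟩
      have : (⟨n, Nat.lt_succ_self n⟩ : Fin (n+1)) = Fin.last n := rfl
      rw [this]; exact H0
  · rintro ⟨⟨h1, h2, h3⟩, hx, hlast⟩
    refine ⟨?_, ?_, ?_⟩
    · intro j
      rcases j with ⟨j, hj⟩
      by_cases hj' : j < n + 1
      · rw [snoc_mk δ x j hj']; exact h1 _
      · have : j = n + 1 := by omega
        subst this
        rw [snoc_top δ x]; exact hx
    · rw [snoc_mk δ x 0 n.succ_pos]; exact h2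
    · intro j hj H
      by_cases hj' : j + 1 < n + 1
      · refine h3 j hj' ?_
        rw [snoc_mk δ x j (by omega), snoc_mk δ x (j+1) hj'] at H
        exact H
      · have hjn : j = n := by omega
        subst hjn
        rw [snoc_mk δ x j (by omega), snoc_top δ x] at H
        refine hlast ⟨?_, H.2⟩
        have : Fin.last j = (⟨j, Nat.lt_succ_self j⟩ : Fin (j+1)) := rfl
        rw [this]; exact H.1

private lemma adm_decomp (n : ℕ) (δ : Fin (n + 2) → ℤ) :
    Adm (n + 1) δ ↔
      Adm n (Fin.init δ) ∧ δ (Fin.last (n + 1)) ∈ S ∧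
        ¬(Fin.init δ (Fin.last n) = 0 ∧ δ (Fin.last (n + 1)) = 1) := by
  conv_lhs => rw [← Fin.snoc_init_self δ]
  rw [adm_snoc]

private lemma S_finite : S.Finite := by
  unfold S
  exact (Set.finite_singleton (1:ℤ)).insert 0 |>.insert (-1)

private lemma finite_aux {n : ℕ} {P : (Fin n → ℤ) → Prop}
    (h : ∀ δ, P δ → ∀ j, δ j ∈ S) : Finite {δ : Fin n → ℤ // P δ} := by
  have : Finite ↥S := S_finite.to_subtype
  have : Finite {δ : Fin n → ℤ // ∀ j, δ j ∈ S} :=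
    Finite.of_equiv _ (Equiv.subtypePiEquivPi (p := fun _ b => b ∈ S)).symm
  refine Finite.of_injective
    (fun d => (⟨d.1, h d.1 d.2⟩ : {δ : Fin n → ℤ // ∀ j, δ j ∈ S})) ?_
  intro a b hab
  apply Subtype.ext
  have := congrArg Subtype.val hab
  simpa using this

private instance finA (n : ℕ) : Finite {δ : Fin (n+1) → ℤ // Adm n δ ∧ δ (Fin.last n) = 0} :=
  finite_aux (fun _ h => h.1.1)

private instance finB (n : ℕ) : Finite {δ : Fin (n+1) → ℤ // Adm n δ ∧ δ (Fin.last n) ≠ 0} :=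
  finite_aux (fun _ h => h.1.1)

private instance finT (n : ℕ) : Finite {δ : Fin (n+1) → ℤ // Adm n δ} :=
  finite_aux (fun _ h => h.1)

private noncomputable def esum (n : ℕ) :
    {δ : Fin (n+1) → ℤ // Adm n δ} ≃
      {δ : Fin (n+1) → ℤ // Adm n δ ∧ δ (Fin.last n) = 0} ⊕
      {δ : Fin (n+1) → ℤ // Adm n δ ∧ δ (Fin.last n) ≠ 0} := by
  classical
  exact ((Equiv.sumCompl (fun d : {δ : Fin (n+1) → ℤ // Adm n δ} =>
      d.1 (Fin.last n) = 0)).symm.trans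
    (Equiv.sumCongr
      (Equiv.subtypeSubtypeEquivSubtypeInter (fun δ => Adm n δ)
        (fun δ => δ (Fin.last n) = 0))
      (Equiv.subtypeSubtypeEquivSubtypeInter (fun δ => Adm n δ)
        (fun δ => δ (Fin.last n) ≠ 0))))

private noncomputable def e0 (n : ℕ) :
    {δ : Fin (n+2) → ℤ // Adm (n+1) δ ∧ δ (Fin.last (n+1)) = 0} ≃
      {δ : Fin (n+1) → ℤ // Adm n δ} where
  toFun d := ⟨Fin.init d.1, ((adm_decomp n d.1).1 d.2.1).1⟩
  invFun d := ⟨Fin.snoc d.1 0,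
    (adm_snoc n d.1 0).2 ⟨d.2, by simp [S], by simp⟩, Fin.snoc_last _ _⟩
  left_inv d := by
    apply Subtype.ext
    dsimp only
    conv_rhs => rw [← Fin.snoc_init_self d.1]
    rw [d.2.2]
  right_inv d := by
    apply Subtype.ext
    dsimp only
    rw [Fin.init_snoc]

private noncomputable def e1 (n : ℕ) :
    {δ : Fin (n+2) → ℤ // Adm (n+1) δ ∧ δ (Fin.last (n+1)) ≠ 0} ≃
      {δ : Fin (n+1) → ℤ // Adm n δ} ⊕
      {δ : Fin (n+1) → ℤ // Adm n δ ∧ δ (Fin.last n) ≠ 0} where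
  toFun d :=
    if h : d.1 (Fin.last (n+1)) = 1 then
      Sum.inr ⟨Fin.init d.1, ((adm_decomp n d.1).1 d.2.1).1,
        fun h0 => ((adm_decomp n d.1).1 d.2.1).2.2 ⟨h0, h⟩⟩
    else
      Sum.inl ⟨Fin.init d.1, ((adm_decomp n d.1).1 d.2.1).1⟩
  invFun d :=
    match d with
    | Sum.inl d => ⟨Fin.snoc d.1 (-1),
        (adm_snoc n d.1 (-1)).2 ⟨d.2, by simp [S], by simp⟩,
        by rw [Fin.snoc_last]; norm_num⟩
    | Sum.inr d => ⟨Fin.snoc d.1 1,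
        (adm_snoc n d.1 1).2 ⟨d.2.1, by simp [S], fun H => d.2.2 H.1⟩,
        by rw [Fin.snoc_last]; norm_num⟩
  left_inv d := by
    dsimp only
    by_cases h : d.1 (Fin.last (n+1)) = 1
    · rw [dif_pos h]
      apply Subtype.ext
      dsimp only
      conv_rhs => rw [← Fin.snoc_init_self d.1]
      rw [h]
    · rw [dif_neg h]
      apply Subtype.ext
      dsimp only
      have hmem := d.2.1.1 (Fin.last (n+1))
      have hne := d.2.2
      have hval : d.1 (Fin.last (n+1)) = -1 := by
        rcases hmem with h' | h' | h' <;> simp_all [S]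
      conv_rhs => rw [← Fin.snoc_init_self d.1]
      rw [hval]
  right_inv d := by
    rcases d with d | d
    · dsimp only
      have hl : (Fin.snoc d.1 (-1) : Fin (n+2) → ℤ) (Fin.last (n+1)) = -1 :=
        Fin.snoc_last _ _
      rw [dif_neg (by rw [hl]; norm_num)]
      apply congrArg Sum.inl
      apply Subtype.ext
      dsimp only
      rw [Fin.init_snoc]
    · dsimp only
      have hl : (Fin.snoc d.1 1 : Fin (n+2) → ℤ) (Fin.last (n+1)) = 1 :=
        Fin.snoc_last _ _
      rw [dif_pos hl]
      apply congrArg Sum.inr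
      apply Subtype.ext
      dsimp only
      rw [Fin.init_snoc]

private lemma base0 : Nat.card {δ : Fin 1 → ℤ // Adm 0 δ ∧ δ (Fin.last 0) = 0} = 1 := by
  have : Unique {δ : Fin 1 → ℤ // Adm 0 δ ∧ δ (Fin.last 0) = 0} := by
    refine ⟨⟨⟨fun _ => 0, ⟨fun j => by simp [S], by norm_num, fun j h => by omega⟩, rfl⟩⟩, ?_⟩
    intro a
    apply Subtype.ext
    funext i
    show a.1 i = 0
    have hi : i = Fin.last 0 := Subsingleton.elim _ _
    rw [hi]
    exact a.2.2
  exact Nat.card_unique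

private lemma base1 : Nat.card {δ : Fin 1 → ℤ // Adm 0 δ ∧ δ (Fin.last 0) ≠ 0} = 1 := by
  have : Unique {δ : Fin 1 → ℤ // Adm 0 δ ∧ δ (Fin.last 0) ≠ 0} := by
    refine ⟨⟨⟨fun _ => -1, ⟨fun j => by simp [S], by norm_num, fun j h => by omega⟩,
      by norm_num⟩⟩, ?_⟩
    intro a
    apply Subtype.ext
    funext i
    show a.1 i = -1
    have hi : i = Fin.last 0 := Subsingleton.elim _ _
    rw [hi]
    have hmem := a.2.1.1 (Fin.last 0)
    have h0 := a.2.2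
    have h1 : a.1 (Fin.last 0) ≠ 1 := a.2.1.2.1
    rcases hmem with h' | h' | h' <;> simp_all [S]
  exact Nat.card_unique

private lemma fib_split (a b c : ℕ) (h1 : b = a + 1) (h2 : c = a + 2) :
    Nat.fib c = Nat.fib a + Nat.fib b := by
  subst h1; subst h2; exact Nat.fib_add_two

private lemma main (n : ℕ) :
    Nat.card {δ : Fin (n+1) → ℤ // Adm n δ ∧ δ (Fin.last n) = 0} = Nat.fib (2*n+1) ∧
    Nat.card {δ : Fin (n+1) → ℤ // Adm n δ ∧ δ (Fin.last n) ≠ 0} = Nat.fib (2*n+2) := by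
  induction n with
  | zero => exact ⟨base0, base1⟩
  | succ n ih =>
    have hT : Nat.card {δ : Fin (n+1) → ℤ // Adm n δ} = Nat.fib (2*n+3) := by
      rw [Nat.card_congr (esum n), Nat.card_sum, ih.1, ih.2]
      exact (fib_split (2*n+1) (2*n+2) (2*n+3) (by ring) (by ring)).symm
    constructor
    · rw [Nat.card_congr (e0 n), hT]
      congr 1
    · rw [Nat.card_congr (e1 n), Nat.card_sum, hT, ih.2]
      rw [fib_split (2*n+2) (2*n+3) (2*(n+1)+2) (by ring) (by ring)]
      exact Nat.add_comm _ _

/-- The number of models for p ordered covariates under simultaneous variable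
selection and fusion, i.e. the number of admissible indicator vectors
δ ∈ {-1,0,1}^p with δ₁ ∈ {-1,0} and no consecutive pair (0,1),
equals the (2p+1)-st Fibonacci number. -/
theorem card_models_eq_fib (p : ℕ) (hp : 1 ≤ p) :
    Nat.card {δ : Fin p → ℤ //
        (∀ j, δ j ∈ ({-1, 0, 1} : Set ℤ)) ∧
        δ ⟨0, hp⟩ ≠ 1 ∧
        ∀ j (h : j + 1 < p),
          ¬(δ ⟨j, Nat.lt_of_succ_lt h⟩ = 0 ∧ δ ⟨j + 1, h⟩ = 1)} =
      Nat.fib (2 * p + 1) := by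
  obtain ⟨n, rfl⟩ : ∃ n, p = n + 1 := ⟨p - 1, (Nat.succ_pred_eq_of_pos hp).symm⟩
  have hmain := main n
  have key : Nat.card {δ : Fin (n+1) → ℤ // Adm n δ} = Nat.fib (2*(n+1)+1) := by
    rw [Nat.card_congr (esum n), Nat.card_sum, hmain.1, hmain.2]
    exact (fib_split (2*n+1) (2*n+2) (2*(n+1)+1) (by ring) (by ring)).symm
  exact key
end
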